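/- arXiv:2104.03093 — 4 statements merged into one kernel-verified Lean document; each statement's English description precedes it below -/
import Mathlib

section
/- Near $+1$ the arc-cosine kernel of order 1 satisfies the expansion $\kappa_1(1-t) = 1 - t + \frac{2\sqrt{2}}{3\pi}t^{3/2} + O(t^{5/2})$ as $t \to 0^+$. -/
/-!
Since `κ₁' = 1 - arccos / π` and `κ₁ 1 = 1`, we have
`π (κ₁ (1 - t) - (1 - t)) = ∫₀ᵗ arccos (1 - s) ds`. For small `s`,
`√(2s) ≤ arccos (1 - s) ≤ (1 + s) √(2s)`, so this integral is `(2√2/3) t^{3/2}` up to an error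
of at most `∫₀ᵗ s √(2s) ds = (2√2/5) t^{5/2}`: integrating the `s^{3/2}` error of the
arccosine gains the extra half power.
-/

open Real Asymptotics

noncomputable def kappa1 (u : ℝ) : ℝ := (u * (π - Real.arccos u) + Real.sqrt (1 - u ^ 2)) / π

open Set intervalIntegral

theorem hasDerivAt_kappa1 {u : ℝ} (h₁ : -1 < u) (h₂ : u < 1) :
    HasDerivAt kappa1 (1 - arccos u / π) u := by
  have hpos : 0 < 1 - u ^ 2 := by nlinarith
  have hsq : HasDerivAt (fun x => 1 - x ^ 2) (-(2 * u)) u := by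
    simpa using (hasDerivAt_pow 2 u).const_sub 1
  have h := (((hasDerivAt_id' u).mul ((hasDerivAt_arccos h₁.ne' h₂.ne).const_sub π)).add
    ((hasDerivAt_sqrt hpos.ne').comp u hsq)).div_const π
  refine h.congr_deriv ?_
  have : √(1 - u ^ 2) ≠ 0 := (sqrt_pos.mpr hpos).ne'
  field_simp
  ring

theorem kappa1_one : kappa1 1 = 1 := by
  simp [kappa1, pi_ne_zero]

theorem kappa1_one_sub {t : ℝ} (ht₀ : 0 ≤ t) (ht₂ : t ≤ 2) :
    kappa1 (1 - t) = 1 - t + (∫ s in (0 : ℝ)..t, arccos (1 - s)) / π := by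
  have hcont : Continuous kappa1 := by unfold kappa1; fun_prop
  have hftc := integral_eq_sub_of_hasDerivAt_of_le (sub_le_self 1 ht₀) hcont.continuousOn
    (fun u hu => hasDerivAt_kappa1 (by linarith [hu.1]) hu.2)
    ((continuous_const.sub (continuous_arccos.div_const π)).intervalIntegrable _ _)
  rw [integral_sub intervalIntegrable_const
    ((continuous_arccos.div_const π).intervalIntegrable _ _), integral_div, kappa1_one] at hftc
  rw [integral_comp_sub_left (fun x => arccos x) 1, sub_zero]
  simp only [integral_const, smul_eq_mul, sub_sub_cancel, mul_one] at hftc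
  linarith

theorem sqrt_two_mul_le_arccos_one_sub {s : ℝ} (hs₀ : 0 ≤ s) (hs₂ : s ≤ 2) :
    √(2 * s) ≤ arccos (1 - s) := by
  have hcos : 1 - s ≤ cos √(2 * s) := by
    have := one_sub_sq_div_two_le_cos (x := √(2 * s))
    rw [sq_sqrt (by linarith)] at this
    linarith
  have hle : √(2 * s) ≤ π := by
    calc √(2 * s) ≤ √4 := sqrt_le_sqrt (by linarith)
      _ = 2 := by rw [show (4 : ℝ) = 2 ^ 2 by norm_num, sqrt_sq zero_le_two]
      _ ≤ π := by linarith [pi_gt_three]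
  calc √(2 * s) = arccos (cos √(2 * s)) := (arccos_cos (sqrt_nonneg _) hle).symm
    _ ≤ arccos (1 - s) := antitone_arccos hcos

theorem arccos_one_sub_le {s : ℝ} (hs₀ : 0 ≤ s) (hs : s ≤ 1 / 4) :
    arccos (1 - s) ≤ (1 + s) * √(2 * s) := by
  set y := (1 + s) * √(2 * s)
  have hy₀ : 0 ≤ y := by positivity
  have hy2 : y ^ 2 = 2 * s * (1 + s) ^ 2 := by
    rw [mul_pow, sq_sqrt (by linarith)]; ring
  have hy1 : y ≤ 1 := by
    rw [← abs_of_nonneg hy₀, ← sq_le_one_iff_abs_le_one]; nlinarith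
  have htaylor := (abs_le.mp (cos_bound (abs_of_nonneg hy₀ ▸ hy1))).2
  rw [abs_of_nonneg hy₀] at htaylor
  have hcos : cos y ≤ 1 - s := by
    have hy4 : y ^ 4 = (y ^ 2) ^ 2 := by ring
    rw [hy4, hy2] at htaylor
    have h4 : (1 + s) ^ 4 ≤ 3 := by
      calc (1 + s) ^ 4 ≤ (5 / 4) ^ 4 := by gcongr; linarith
        _ ≤ 3 := by norm_num
    nlinarith [mul_le_mul_of_nonneg_left h4 (sq_nonneg s)]
  calc arccos (1 - s) ≤ arccos (cos y) := antitone_arccos hcos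
    _ = y := arccos_cos hy₀ (by linarith [pi_gt_three])

theorem abs_arccos_one_sub_sub_sqrt_le {s : ℝ} (hs₀ : 0 ≤ s) (hs : s ≤ 1 / 4) :
    |arccos (1 - s) - √(2 * s)| ≤ s * √(2 * s) := by
  rw [abs_of_nonneg (sub_nonneg.mpr (sqrt_two_mul_le_arccos_one_sub hs₀ (by linarith)))]
  linarith [arccos_one_sub_le hs₀ hs]

theorem integral_sqrt_two_mul (t : ℝ) :
    ∫ s in (0 : ℝ)..t, √(2 * s) = 2 * √2 / 3 * t ^ ((3 : ℝ) / 2) := by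
  simp only [sqrt_mul zero_le_two, sqrt_eq_rpow, integral_const_mul]
  rw [integral_rpow (Or.inl (by norm_num)), zero_rpow (by norm_num)]
  norm_num
  ring

theorem integral_mul_sqrt_two_mul {t : ℝ} (ht : 0 ≤ t) :
    ∫ s in (0 : ℝ)..t, s * √(2 * s) = 2 * √2 / 5 * t ^ ((5 : ℝ) / 2) := by
  have h : EqOn (fun s : ℝ => s * √(2 * s)) (fun s => √2 * s ^ ((3 : ℝ) / 2)) (uIcc 0 t) := by
    intro s hs
    rw [uIcc_of_le ht] at hs
    simp only [sqrt_mul zero_le_two, sqrt_eq_rpow]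
    rw [show (3 : ℝ) / 2 = 1 + 1 / 2 by norm_num, rpow_add' hs.1 (by norm_num), rpow_one]
    ring
  rw [integral_congr h, integral_const_mul, integral_rpow (Or.inl (by norm_num)),
    zero_rpow (by norm_num)]
  norm_num
  ring

theorem kappa1_expansion_near_one :
    (fun t : ℝ => kappa1 (1 - t) -
        (1 - t + 2 * Real.sqrt 2 / (3 * π) * t ^ ((3 : ℝ) / 2)))
      =O[nhdsWithin 0 (Set.Ioi 0)] (fun t : ℝ => t ^ ((5 : ℝ) / 2)) := by
  refine IsBigO.of_bound (2 * √2 / 5 / π) ?_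
  filter_upwards [Ioo_mem_nhdsGT (by norm_num : (0 : ℝ) < 1 / 4)] with t ⟨ht₀, ht⟩
  have hcont : Continuous fun s : ℝ => arccos (1 - s) := by fun_prop
  have hsqrt : Continuous fun s : ℝ => √(2 * s) := by fun_prop
  have hrem : kappa1 (1 - t) - (1 - t + 2 * √2 / (3 * π) * t ^ ((3 : ℝ) / 2)) =
      (∫ s in (0 : ℝ)..t, (arccos (1 - s) - √(2 * s))) / π := by
    rw [kappa1_one_sub ht₀.le (by linarith), integral_sub (hcont.intervalIntegrable _ _)
      (hsqrt.intervalIntegrable _ _), integral_sqrt_two_mul]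
    field_simp
    ring
  have hbound : ‖∫ s in (0 : ℝ)..t, (arccos (1 - s) - √(2 * s))‖ ≤
      2 * √2 / 5 * t ^ ((5 : ℝ) / 2) := by
    rw [← integral_mul_sqrt_two_mul ht₀.le]
    exact norm_integral_le_of_norm_le ht₀.le
      (Filter.Eventually.of_forall fun s hs =>
        abs_arccos_one_sub_sub_sqrt_le hs.1.le (by linarith [hs.2]))
      ((by fun_prop : Continuous fun s : ℝ => s * √(2 * s)).intervalIntegrable _ _)
  rw [hrem, norm_div, norm_of_nonneg pi_pos.le, norm_of_nonneg (rpow_nonneg ht₀.le _),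
    div_mul_eq_mul_div]
  exact div_le_div_of_nonneg_right hbound pi_pos.le
end

section
/- Define recursively $\nu_\ell = K_{\ell-1}(-1+t)/(1+\alpha^2)^{\ell-1}$ where $K_0(u)=u$ and $K_\ell(u) = K_{\ell-1}(u) + \alpha^2(1+\alpha^2)^{\ell-1}\kappa_1(K_{\ell-1}(u)/(1+\alpha^2)^{\ell-1})$. Then for all $\ell \ge 1$ and $t \in [0,2]$, $|\nu_\ell| \le 1$. -/
/-!
With `θ = arccos u` one has `π κ₁(u) = (π - θ) cos θ + sin θ`, which decreases on `[0, π]`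
(its derivative is `-(π - θ) sin θ`) from `π` at `θ = 0` to `0` at `θ = π`; so `κ₁` maps `[-1, 1]`
into `[0, 1]`. Writing `c = α²` and `v_ℓ = K_ℓ(u) / (1 + c)^ℓ`, the recursion reads
`v_{ℓ+1} = (v_ℓ + c κ₁(v_ℓ)) / (1 + c)`, a convex combination of `v_ℓ` and `κ₁(v_ℓ)`, so `v_ℓ`
stays in `[-1, 1]` when `v_0 = u = -1 + t` does.
-/

open Real

lemma antitoneOn_pi_sub_mul_cos_add_sin :
    AntitoneOn (fun θ : ℝ => (π - θ) * cos θ + sin θ) (Set.Icc 0 π) := by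
  refine antitoneOn_of_hasDerivWithinAt_nonpos (f' := fun θ => -(π - θ) * sin θ)
    (convex_Icc 0 π) (by fun_prop) (fun θ _ => ?_) (fun θ hθ => ?_)
  · have h : HasDerivAt (fun θ : ℝ => (π - θ) * cos θ + sin θ)
        ((0 - 1) * cos θ + (π - θ) * -sin θ + cos θ) θ :=
      (((hasDerivAt_const θ π).sub (hasDerivAt_id θ)).mul (hasDerivAt_cos θ)).add
        (hasDerivAt_sin θ)
    exact (h.congr_deriv (by ring)).hasDerivWithinAt
  · rw [interior_Icc] at hθ
    have hsin := sin_nonneg_of_nonneg_of_le_pi hθ.1.le hθ.2.le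
    nlinarith [hθ.2]

lemma kappa1_mem_Icc {u : ℝ} (hu : u ∈ Set.Icc (-1 : ℝ) 1) : kappa1 u ∈ Set.Icc (0 : ℝ) 1 := by
  set θ := arccos u
  have hθ : θ ∈ Set.Icc 0 π := ⟨arccos_nonneg u, arccos_le_pi u⟩
  have hκ : kappa1 u = ((π - θ) * cos θ + sin θ) / π := by
    rw [kappa1, sin_arccos, cos_arccos hu.1 hu.2]
    ring
  have h_le := antitoneOn_pi_sub_mul_cos_add_sin ⟨le_rfl, pi_pos.le⟩ hθ hθ.1
  have h_ge := antitoneOn_pi_sub_mul_cos_add_sin hθ ⟨pi_pos.le, le_rfl⟩ hθ.2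
  simp only [sub_zero, cos_zero, sin_zero, mul_one, add_zero, sub_self, zero_mul,
    sin_pi] at h_le h_ge
  rw [hκ]
  exact ⟨div_nonneg h_ge pi_pos.le, (div_le_one pi_pos).2 h_le⟩

lemma add_mul_div_one_add_mem_Icc {v k c : ℝ} (hv : v ∈ Set.Icc (-1 : ℝ) 1)
    (hk : k ∈ Set.Icc (0 : ℝ) 1) (hc : 0 ≤ c) : (v + c * k) / (1 + c) ∈ Set.Icc (-1 : ℝ) 1 := by
  have h1c : 0 < 1 + c := by linarith
  constructor
  · rw [le_div_iff₀ h1c]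
    nlinarith [hv.1, hk.1]
  · rw [div_le_one h1c]
    nlinarith [hv.2, hk.2]

section Recursion

variable {c : ℝ} {K : ℕ → ℝ → ℝ}
  (hKrec : ∀ ℓ u, K (ℓ + 1) u = K ℓ u + c * (1 + c) ^ ℓ * kappa1 (K ℓ u / (1 + c) ^ ℓ))
include hKrec

lemma div_pow_succ_eq_of_recursion (hc : 1 + c ≠ 0) (ℓ : ℕ) (u : ℝ) :
    K (ℓ + 1) u / (1 + c) ^ (ℓ + 1) =
      (K ℓ u / (1 + c) ^ ℓ + c * kappa1 (K ℓ u / (1 + c) ^ ℓ)) / (1 + c) := by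
  have hpow : (1 + c) ^ ℓ ≠ 0 := pow_ne_zero ℓ hc
  rw [hKrec]
  field_simp
  ring

lemma div_pow_mem_Icc_of_recursion (hc : 0 ≤ c) (hK0 : ∀ u, K 0 u = u) {u : ℝ}
    (hu : u ∈ Set.Icc (-1 : ℝ) 1) (ℓ : ℕ) : K ℓ u / (1 + c) ^ ℓ ∈ Set.Icc (-1 : ℝ) 1 := by
  induction ℓ with
  | zero => simpa [hK0] using hu
  | succ ℓ ih =>
    rw [div_pow_succ_eq_of_recursion hKrec (by positivity)]
    exact add_mul_div_one_add_mem_Icc ih (kappa1_mem_Icc ih) hc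

end Recursion

theorem nu_ell_abs_le_one_general (α : ℝ)
    (K : ℕ → ℝ → ℝ)
    (hK0 : ∀ u, K 0 u = u)
    (hKrec : ∀ ℓ u, K (ℓ + 1) u =
      K ℓ u + α ^ 2 * (1 + α ^ 2) ^ ℓ * kappa1 (K ℓ u / (1 + α ^ 2) ^ ℓ)) :
    ∀ ℓ : ℕ, 1 ≤ ℓ → ∀ t ∈ Set.Icc (0 : ℝ) 2,
      |K (ℓ - 1) (-1 + t) / (1 + α ^ 2) ^ (ℓ - 1)| ≤ 1 := by
  intro ℓ _ t ht
  have hu : -1 + t ∈ Set.Icc (-1 : ℝ) 1 := ⟨by linarith [ht.1], by linarith [ht.2]⟩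
  exact abs_le.2 (div_pow_mem_Icc_of_recursion hKrec (sq_nonneg α) hK0 hu (ℓ - 1))

theorem nu_ell_abs_le_one (α : ℝ) (hα : 0 < α)
    (K : ℕ → ℝ → ℝ)
    (hK0 : ∀ u, K 0 u = u)
    (hKrec : ∀ ℓ u, K (ℓ + 1) u =
      K ℓ u + α ^ 2 * (1 + α ^ 2) ^ ℓ * kappa1 (K ℓ u / (1 + α ^ 2) ^ ℓ)) :
    ∀ ℓ : ℕ, 1 ≤ ℓ → ∀ t ∈ Set.Icc (0 : ℝ) 2,
      |K (ℓ - 1) (-1 + t) / (1 + α ^ 2) ^ (ℓ - 1)| ≤ 1 :=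
  nu_ell_abs_le_one_general α K hK0 hKrec
end

section
/- Let $\beta_j \in [0,1]$ for $j \ge 1$, $\beta_0 = 0$, and $\alpha > 0$, and define $\delta_\ell = \frac{-1+\alpha^2\sum_{j=0}^{\ell-1}(1+\alpha^2)^{j-1}\beta_j}{(1+\alpha^2)^{\ell-1}}$ where the $\beta_j$ satisfy the recursion $\beta_\ell = \kappa_1(\delta_\ell)$. Then $|\delta_\ell| < 1$ for all $\ell \ge 2$. -/
open Real

theorem delta_ell_abs_lt_one (α : ℝ) (hα : 0 < α)
    (β δ : ℕ → ℝ)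
    (hβ0 : β 0 = 0)
    (hβmem : ∀ j : ℕ, 1 ≤ j → β j ∈ Set.Icc (0 : ℝ) 1)
    (hδ : ∀ ℓ : ℕ, 1 ≤ ℓ →
      δ ℓ = (-1 + α ^ 2 * ∑ j ∈ Finset.range ℓ, (1 + α ^ 2) ^ ((j : ℤ) - 1) * β j) /
        (1 + α ^ 2) ^ (ℓ - 1))
    (hβrec : ∀ ℓ : ℕ, 1 ≤ ℓ → β ℓ = kappa1 (δ ℓ)) :
    ∀ ℓ : ℕ, 2 ≤ ℓ → |δ ℓ| < 1 := by
  intro ℓ hℓ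
  have hℓ1 : 1 ≤ ℓ := by omega
  set q : ℝ := 1 + α ^ 2 with hqdef
  have hq1 : 1 < q := by nlinarith
  have hq0 : 0 < q := by linarith
  set S : ℝ := ∑ j ∈ Finset.range ℓ, q ^ ((j : ℤ) - 1) * β j with hSdef
  have hden1 : 1 < q ^ (ℓ - 1) := one_lt_pow₀ hq1 (by omega)
  have hden0 : 0 < q ^ (ℓ - 1) := by positivity
  have hβnn : ∀ j : ℕ, 0 ≤ β j := by
    intro j
    rcases Nat.eq_zero_or_pos j with h | h
    · simp [h, hβ0]
    · exact (hβmem j h).1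
  have hS0 : 0 ≤ S := by
    apply Finset.sum_nonneg
    intro j _
    exact mul_nonneg (le_of_lt (zpow_pos hq0 _)) (hβnn j)
  -- telescoping upper bound
  have hterm : ∀ j : ℕ, α ^ 2 * (q ^ ((j : ℤ) - 1) * β j)
      ≤ q ^ (((j+1 : ℕ) : ℤ) - 1) - q ^ ((j : ℤ) - 1) := by
    intro j
    have hb : β j ≤ 1 := by
      rcases Nat.eq_zero_or_pos j with h | h
      · simp [h, hβ0]
      · exact (hβmem j h).2
    have hpow : q ^ (((j+1 : ℕ) : ℤ) - 1) = q * q ^ ((j : ℤ) - 1) := by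
      push_cast
      rw [show (j : ℤ) + 1 - 1 = ((j : ℤ) - 1) + 1 by ring, zpow_add_one₀ (ne_of_gt hq0)]
      ring
    have hz : (0:ℝ) < q ^ ((j : ℤ) - 1) := zpow_pos hq0 _
    rw [hpow]
    have : α ^ 2 * (q ^ ((j : ℤ) - 1) * β j) ≤ α ^ 2 * (q ^ ((j : ℤ) - 1) * 1) := by
      apply mul_le_mul_of_nonneg_left _ (by positivity)
      exact mul_le_mul_of_nonneg_left hb (le_of_lt hz)
    calc α ^ 2 * (q ^ ((j : ℤ) - 1) * β j) ≤ α ^ 2 * (q ^ ((j : ℤ) - 1) * 1) := this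
      _ = q * q ^ ((j : ℤ) - 1) - q ^ ((j : ℤ) - 1) := by rw [hqdef]; ring
  have hSup : α ^ 2 * S ≤ q ^ ((ℓ : ℤ) - 1) - q ^ ((0 : ℤ) - 1) := by
    have := Finset.sum_range_sub (fun j : ℕ => q ^ ((j : ℤ) - 1)) ℓ
    calc α ^ 2 * S = ∑ j ∈ Finset.range ℓ, α ^ 2 * (q ^ ((j : ℤ) - 1) * β j) := by
          rw [hSdef, Finset.mul_sum]
      _ ≤ ∑ j ∈ Finset.range ℓ, (q ^ (((j+1 : ℕ) : ℤ) - 1) - q ^ ((j : ℤ) - 1)) :=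
          Finset.sum_le_sum (fun j _ => hterm j)
      _ = q ^ ((ℓ : ℤ) - 1) - q ^ ((0 : ℤ) - 1) := by
          simpa using this
  have hcast : q ^ ((ℓ : ℤ) - 1) = q ^ (ℓ - 1) := by
    rw [show ((ℓ : ℤ) - 1) = ((ℓ - 1 : ℕ) : ℤ) by omega, zpow_natCast]
  have hqinv : 0 < q ^ ((0 : ℤ) - 1) := zpow_pos hq0 _
  rw [hδ ℓ hℓ1, abs_div, abs_of_pos hden0, div_lt_one hden0, abs_lt]
  constructor
  · nlinarith [mul_nonneg (sq_nonneg α) hS0]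
  · rw [← hcast] at hden1 hden0 ⊢
    nlinarith
end

section
/- For the sequence $u_\ell$ defined by $u_0 \in [-1,1]$ and $u_\ell = \frac{u_{\ell-1} + \alpha^2\kappa_1(u_{\ell-1})}{1+\alpha^2}$ with $\alpha > 0$, it holds for every $\ell \ge 0$ that $u_\ell \le u_0 + \frac{\alpha^2}{1+\alpha^2}(\kappa_1(u_0)-u_0)\,\ell$. -/
open Real

/-!
Write the recursion as `u (ℓ + 1) = u ℓ + c * g (u ℓ)` with `c = α² / (1 + α²)` and
`g = κ₁ - id`. On `[-1, ∞)` the gap `g` is antitone (its derivative is `κ₀ - 1 = -arccos / π` on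
`(-1, 1)`, and it vanishes on `[1, ∞)`), hence nonnegative. So the sequence increases from `u 0`,
and every increment `c * g (u ℓ)` is at most the first one, `c * g (u 0)`.
-/

theorem le_add_mul_of_iterate_add_antitoneOn {g : ℝ → ℝ} {a c : ℝ} (hc : 0 ≤ c)
    (hg : AntitoneOn g (Set.Ici a)) (hg_nonneg : ∀ x ∈ Set.Ici a, 0 ≤ g x)
    {u : ℕ → ℝ} (hu0 : a ≤ u 0) (hu : ∀ n, u (n + 1) = u n + c * g (u n)) (n : ℕ) :
    u n ≤ u 0 + c * g (u 0) * n := by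
  have hge : ∀ n, u 0 ≤ u n := by
    intro n
    induction n with
    | zero => rfl
    | succ n ih =>
      have := mul_nonneg hc (hg_nonneg _ (hu0.trans ih))
      rw [hu]
      linarith
  induction n with
  | zero => simp
  | succ n ih =>
    have hstep : c * g (u n) ≤ c * g (u 0) :=
      mul_le_mul_of_nonneg_left (hg hu0 (hu0.trans (hge n)) (hge n)) hc
    rw [hu]
    push_cast
    linarith

theorem kappa1_of_one_le {x : ℝ} (hx : 1 ≤ x) : kappa1 x = x := by
  have hsq : Real.sqrt (1 - x ^ 2) = 0 := Real.sqrt_eq_zero'.mpr (by nlinarith)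
  simp [kappa1, Real.arccos_eq_zero.mpr hx, hsq, Real.pi_ne_zero]

theorem continuous_kappa1 : Continuous kappa1 := by
  unfold kappa1
  fun_prop

theorem hasDerivAt_kappa1_s14 {x : ℝ} (hx : x ∈ Set.Ioo (-1 : ℝ) 1) :
    HasDerivAt kappa1 ((π - Real.arccos x) / π) x := by
  have hpos : 0 < 1 - x ^ 2 := by nlinarith [hx.1, hx.2]
  have hsqrt : HasDerivAt (fun y : ℝ => Real.sqrt (1 - y ^ 2))
      (1 / (2 * Real.sqrt (1 - x ^ 2)) * -(2 * x)) x :=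
    (Real.hasDerivAt_sqrt hpos.ne').comp x (by simpa using (hasDerivAt_pow 2 x).const_sub 1)
  have hmul : HasDerivAt (fun y : ℝ => y * (π - Real.arccos y))
      (1 * (π - Real.arccos x) + x * (0 - -(1 / Real.sqrt (1 - x ^ 2)))) x :=
    (hasDerivAt_id x).mul ((hasDerivAt_const x π).sub
      (Real.hasDerivAt_arccos hx.1.ne' hx.2.ne))
  refine ((hmul.add hsqrt).div_const π).congr_deriv ?_
  field_simp [(Real.sqrt_pos.mpr hpos).ne']
  ring

theorem antitoneOn_kappa1_sub_self : AntitoneOn (fun x => kappa1 x - x) (Set.Ici (-1)) := by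
  have hIcc : AntitoneOn (fun x => kappa1 x - x) (Set.Icc (-1) 1) := by
    have hderiv : ∀ x ∈ interior (Set.Icc (-1 : ℝ) 1),
        HasDerivAt (fun x => kappa1 x - x) (-Real.arccos x / π) x := by
      intro x hx
      rw [interior_Icc] at hx
      refine ((hasDerivAt_kappa1_s14 hx).sub (hasDerivAt_id x)).congr_deriv ?_
      field_simp [Real.pi_ne_zero]
      ring
    refine antitoneOn_of_deriv_nonpos (convex_Icc _ _)
      (continuous_kappa1.sub continuous_id).continuousOn
      (fun x hx => (hderiv x hx).differentiableAt.differentiableWithinAt) fun x hx => ?_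
    rw [(hderiv x hx).deriv]
    exact div_nonpos_of_nonpos_of_nonneg (neg_nonpos.mpr (Real.arccos_nonneg x)) Real.pi_pos.le
  have hIci : AntitoneOn (fun x => kappa1 x - x) (Set.Ici 1) := fun x hx y hy _ => by
    simp only [kappa1_of_one_le hx, kappa1_of_one_le hy, sub_self, le_refl]
  rw [← Set.Icc_union_Ici_eq_Ici (by norm_num : (-1 : ℝ) ≤ 1)]
  exact hIcc.union_right hIci (isGreatest_Icc (by norm_num)) isLeast_Ici

theorem kappa1_sub_self_nonneg {x : ℝ} (hx : x ∈ Set.Ici (-1)) : 0 ≤ kappa1 x - x := by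
  have hmax : -1 ≤ max x 1 := hx.trans (le_max_left x 1)
  have := antitoneOn_kappa1_sub_self hx hmax (le_max_left x 1)
  simp only [kappa1_of_one_le (le_max_right x 1), sub_self] at this
  exact this

theorem u_seq_upper_bound_general (α : ℝ)
    (u : ℕ → ℝ) (hu0 : u 0 ∈ Set.Icc (-1 : ℝ) 1)
    (hrec : ∀ ℓ : ℕ, u (ℓ + 1) = (u ℓ + α ^ 2 * kappa1 (u ℓ)) / (1 + α ^ 2)) :
    ∀ ℓ : ℕ, u ℓ ≤ u 0 + α ^ 2 / (1 + α ^ 2) * (kappa1 (u 0) - u 0) * ℓ := by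
  have hstep : ∀ ℓ, u (ℓ + 1) = u ℓ + α ^ 2 / (1 + α ^ 2) * (kappa1 (u ℓ) - u ℓ) := by
    intro ℓ
    rw [hrec]
    field_simp
    ring
  exact le_add_mul_of_iterate_add_antitoneOn (by positivity) antitoneOn_kappa1_sub_self
    (fun x hx => kappa1_sub_self_nonneg hx) hu0.1 hstep

theorem u_seq_upper_bound (α : ℝ) (hα : 0 < α)
    (u : ℕ → ℝ) (hu0 : u 0 ∈ Set.Icc (-1 : ℝ) 1)
    (hrec : ∀ ℓ : ℕ, u (ℓ + 1) = (u ℓ + α ^ 2 * kappa1 (u ℓ)) / (1 + α ^ 2)) :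
    ∀ ℓ : ℕ, u ℓ ≤ u 0 + α ^ 2 / (1 + α ^ 2) * (kappa1 (u 0) - u 0) * ℓ :=
  u_seq_upper_bound_general α u hu0 hrec
end
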